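/- arXiv:2405.08364 — 2 statements merged into one kernel-verified Lean document; each statement's English description precedes it below -/
import Mathlib

section
/- Let a and u be elements of a ring R. If a is addable and u is regular (i.e., u = u·t·u for some t ∈ R), then a·u and u·a are both addable. -/
/-- A brachymorphism between unital rings: `f (1 + x) = 1 + f x` and `f (x * y) = f x * f y`. -/
def IsBrachy {R S : Type*} [Ring R] [Ring S] (f : R → S) : Prop :=
  (∀ x : R, f (1 + x) = 1 + f x) ∧ (∀ x y : R, f (x * y) = f x * f y)

/-- An element `a` of `R` is addable if every brachymorphism from `R` to any ring
satisfies `f (a + x) = f a + f x`. -/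
def Addable {R : Type*} [Ring R] (a : R) : Prop :=
  ∀ (S : Type) (_ : Ring S) (f : R → S), IsBrachy f → ∀ x : R, f (a + x) = f a + f x

lemma brachy_f0 {R S : Type*} [Ring R] [Ring S] {f : R → S} (hf : IsBrachy f) : f 0 = 0 := by
  obtain ⟨h1, hm⟩ := hf
  have e0 : f 0 = f 0 * f 0 := by rw [← hm, mul_zero]
  have e1 : f 1 = 1 + f 0 := by simpa using h1 0
  have e2 : f 0 = f 0 + f 0 * f 0 := by
    conv_lhs => rw [show (0 : R) = 0 * 1 by noncomm_ring, hm, e1]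
    noncomm_ring
  have e3 : f 0 * f 0 = 0 := (left_eq_add.mp e2)
  rw [e0, e3]

lemma brachy_one_sub {R S : Type*} [Ring R] [Ring S] {f : R → S} (hf : IsBrachy f) (s : R) :
    f (1 - s) = 1 - f s := by
  obtain ⟨h1, hm⟩ := hf
  have f0 : f 0 = 0 := brachy_f0 ⟨h1, hm⟩
  have hneg1 : f (-1) = -1 := by
    have := h1 (-1)
    rw [show (1 : R) + -1 = 0 by abel, f0] at this
    exact eq_neg_of_add_eq_zero_right this.symm
  have hnegs : f (-s) = - f s := by
    rw [show (-s : R) = -1 * s by noncomm_ring, hm, hneg1, neg_one_mul]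
  rw [show (1 - s : R) = 1 + (-s) by noncomm_ring, h1, hnegs]
  noncomm_ring

lemma key_right {R : Type*} [Ring R] {S : Type*} [Ring S] {f : R → S} (hf : IsBrachy f)
    (b s : R) (hs : s * s = s) (hbs : b * s = b)
    (H : ∀ y : R, f (b + y * s) = f b + f (y * s)) (x : R) :
    f (b + x) = f b + f x := by
  obtain ⟨h1, hm⟩ := hf
  have f1s : f (1 - s) = 1 - f s := brachy_one_sub ⟨h1, hm⟩ s
  have hfb : f b = f b * f s := by
    conv_lhs => rw [← hbs]
    exact hm b s
  have hB : f (b + x) * f s = f b * f s + f x * f s := by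
    have e : (b + x) * s = b + x * s := by rw [add_mul, hbs]
    calc f (b + x) * f s = f ((b + x) * s) := (hm _ _).symm
      _ = f (b + x * s) := by rw [e]
      _ = f b + f (x * s) := H x
      _ = f b * f s + f x * f s := by rw [hm, ← hfb]
  have hC : f (b + x) * (1 - f s) = f x * (1 - f s) := by
    have e : (b + x) * (1 - s) = x * (1 - s) := by
      rw [add_mul, mul_sub, mul_one, hbs, sub_self, zero_add]
    calc f (b + x) * (1 - f s) = f (b + x) * f (1 - s) := by rw [f1s]
      _ = f ((b + x) * (1 - s)) := (hm _ _).symm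
      _ = f (x * (1 - s)) := by rw [e]
      _ = f x * f (1 - s) := hm _ _
      _ = f x * (1 - f s) := by rw [f1s]
  calc f (b + x) = f (b + x) * f s + f (b + x) * (1 - f s) := by noncomm_ring
    _ = (f b * f s + f x * f s) + f x * (1 - f s) := by rw [hB, hC]
    _ = f b * f s + f x := by noncomm_ring
    _ = f b + f x := by rw [← hfb]

lemma key_left {R : Type*} [Ring R] {S : Type*} [Ring S] {f : R → S} (hf : IsBrachy f)
    (b s : R) (hs : s * s = s) (hsb : s * b = b)
    (H : ∀ y : R, f (b + s * y) = f b + f (s * y)) (x : R) :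
    f (b + x) = f b + f x := by
  obtain ⟨h1, hm⟩ := hf
  have f1s : f (1 - s) = 1 - f s := brachy_one_sub ⟨h1, hm⟩ s
  have hfb : f b = f s * f b := by
    conv_lhs => rw [← hsb]
    exact hm s b
  have hB : f s * f (b + x) = f s * f b + f s * f x := by
    have e : s * (b + x) = b + s * x := by rw [mul_add, hsb]
    calc f s * f (b + x) = f (s * (b + x)) := (hm _ _).symm
      _ = f (b + s * x) := by rw [e]
      _ = f b + f (s * x) := H x
      _ = f s * f b + f s * f x := by rw [hm, ← hfb]
  have hC : (1 - f s) * f (b + x) = (1 - f s) * f x := by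
    have e : (1 - s) * (b + x) = (1 - s) * x := by
      rw [mul_add, sub_mul, one_mul, hsb, sub_self, zero_add]
    calc (1 - f s) * f (b + x) = f (1 - s) * f (b + x) := by rw [f1s]
      _ = f ((1 - s) * (b + x)) := (hm _ _).symm
      _ = f ((1 - s) * x) := by rw [e]
      _ = f (1 - s) * f x := hm _ _
      _ = (1 - f s) * f x := by rw [f1s]
  calc f (b + x) = f s * f (b + x) + (1 - f s) * f (b + x) := by noncomm_ring
    _ = (f s * f b + f s * f x) + (1 - f s) * f x := by rw [hB, hC]
    _ = f s * f b + f x := by noncomm_ring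
    _ = f b + f x := by rw [← hfb]

theorem stmt_6 {R : Type*} [Ring R] (a u : R) (ha : Addable a) (hu : ∃ t : R, u = u * t * u) :
    Addable (a * u) ∧ Addable (u * a) := by
  obtain ⟨t, ht⟩ := hu
  constructor
  · intro S hS f hf x
    refine key_right hf (a * u) (t * u) ?_ ?_ ?_ x
    · conv_rhs => rw [ht]
      noncomm_ring
    · conv_rhs => rw [ht]
      noncomm_ring
    · intro y
      have e : a * u + y * (t * u) = (a + y * t) * u := by noncomm_ring
      rw [e, hf.2, ha S hS f hf (y * t), add_mul, ← hf.2, ← hf.2, mul_assoc]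
  · intro S hS f hf x
    refine key_left hf (u * a) (u * t) ?_ ?_ ?_ x
    · conv_rhs => rw [ht]
      noncomm_ring
    · conv_rhs => rw [ht]
      noncomm_ring
    · intro y
      have e : u * a + u * t * y = u * (a + t * y) := by noncomm_ring
      rw [e, hf.2, ha S hS f hf (t * y), mul_add, ← hf.2, ← hf.2, ← mul_assoc]
end

section
/- For every ring R, the addable kernel Add(R) is right integrally closed in R: if x ∈ R satisfies xⁿ = a_0 + a_1·x + ... + a_{n-1}·x^{n-1} with all a_k addable (n ≥ 1), then x is addable. -/
section Aux

variable {R : Type*} [Ring R] {S : Type} [Ring S]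

lemma brachy_zero (f : R → S) (hf : IsBrachy f) : f 0 = 0 := by
  have h1 : f 1 = 1 + f 0 := by simpa using hf.1 0
  have h2 : f 0 = f 0 * f 1 := by simpa using hf.2 0 1
  have h3 : f 0 = f 0 * f 0 := by simpa using hf.2 0 0
  have h4 : f 0 + 0 = f 0 + f 0 := by
    calc f 0 + 0 = f 0 * (1 + f 0) := by rw [← h1, ← h2, add_zero]
    _ = f 0 + f 0 * f 0 := by rw [mul_add, mul_one]
    _ = f 0 + f 0 := by rw [← h3]
  exact (add_left_cancel h4).symm

lemma brachy_one (f : R → S) (hf : IsBrachy f) : f 1 = 1 := by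
  have h1 : f 1 = 1 + f 0 := by simpa using hf.1 0
  rw [h1, brachy_zero f hf, add_zero]

lemma brachy_pow (f : R → S) (hf : IsBrachy f) (x : R) : ∀ k : ℕ, f (x ^ k) = f x ^ k := by
  intro k
  induction k with
  | zero => simpa using brachy_one f hf
  | succ k ih => rw [pow_succ, hf.2, ih, pow_succ]

lemma addable_zero : Addable (0 : R) := by
  intro S iS f hf y
  rw [zero_add, brachy_zero f hf, zero_add]

lemma addable_one : Addable (1 : R) := by
  intro S iS f hf y
  rw [hf.1 y, brachy_one f hf]

lemma addable_add {a b : R} (ha : Addable a) (hb : Addable b) : Addable (a + b) := by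
  intro S iS f hf y
  have h1 : a + b + y = a + (b + y) := add_assoc a b y
  rw [h1, ha S iS f hf, hb S iS f hf, ha S iS f hf b, add_assoc]

lemma addable_neg {a : R} (ha : Addable a) : Addable (-a) := by
  intro S iS f hf y
  have h0 : f (a + -a) = f a + f (-a) := ha S iS f hf (-a)
  rw [add_neg_cancel, brachy_zero f hf] at h0
  have hna : f (-a) = - f a := eq_neg_of_add_eq_zero_right h0.symm
  have h1 : f y = f a + f (-a + y) := by
    have := ha S iS f hf (-a + y)
    rw [show a + (-a + y) = y by abel] at this
    exact this
  have h3 : f (-a + y) = f y - f a := by rw [h1]; abel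
  rw [hna, h3]; abel

lemma addable_sub {a b : R} (ha : Addable a) (hb : Addable b) : Addable (a - b) := by
  rw [sub_eq_add_neg]
  exact addable_add ha (addable_neg hb)

lemma addable_natCast (m : ℕ) : Addable (m : R) := by
  induction m with
  | zero => simpa using (addable_zero : Addable (0 : R))
  | succ m ih =>
    push_cast
    exact addable_add ih addable_one

end Aux

section Peel

variable {R : Type*} [Ring R] {S : Type} [Ring S]

lemma peel (f : R → S) (hf : IsBrachy f) :
    ∀ n : ℕ, 1 ≤ n → ∀ (a : ℕ → R) (x w : R), (∀ k < n, Addable (a k)) →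
    f ((∑ k ∈ Finset.range n, a k * x ^ k) + w * x ^ (n - 1))
      = (∑ k ∈ Finset.range n, f (a k) * f x ^ k) + f w * f x ^ (n - 1) := by
  intro n
  induction n with
  | zero => omega
  | succ n ih =>
    intro _ a x w ha
    rcases Nat.eq_zero_or_pos n with h0 | hpos
    · subst h0
      simp only [zero_add, Finset.sum_range_one, pow_zero, mul_one, Nat.sub_self]
      exact ha 0 (by omega) S ‹Ring S› f hf w
    · simp only [Nat.add_sub_cancel]
      have key : (∑ k ∈ Finset.range (n + 1), a k * x ^ k) + w * x ^ n
          = a 0 + ((∑ k ∈ Finset.range n, a (k + 1) * x ^ k) + w * x ^ (n - 1)) * x := by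
        rw [Finset.sum_range_succ' (fun k => a k * x ^ k)]
        simp only [pow_zero, mul_one, add_mul, Finset.sum_mul, mul_assoc, ← pow_succ]
        rw [Nat.sub_add_cancel hpos]
        abel
      rw [key, ha 0 (by omega) S ‹Ring S› f hf, hf.2,
        ih hpos (fun k => a (k + 1)) x w (fun k hk => ha (k + 1) (by omega))]
      rw [Finset.sum_range_succ' (fun k => f (a k) * f x ^ k)]
      simp only [pow_zero, mul_one, add_mul, Finset.sum_mul, mul_assoc, ← pow_succ]
      rw [Nat.sub_add_cancel hpos]
      abel

lemma vanish (n : ℕ) (hn : 1 ≤ n) (x : R) (a : ℕ → R) (ha : ∀ k < n, Addable (a k))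
    (hx : x ^ n = ∑ k ∈ Finset.range n, a k * x ^ k)
    (f : R → S) (hf : IsBrachy f) (y : R) :
    (f (x + y) - f x - f y) * f x ^ (n - 1) = 0 := by
  have hsum : (∑ k ∈ Finset.range n, f (a k) * f x ^ k) = f x ^ n := by
    have h3 := peel f hf n hn a x 0 ha
    rw [zero_mul, add_zero, ← hx, brachy_pow f hf, brachy_zero f hf, zero_mul, add_zero] at h3
    exact h3.symm
  have e : (x + y) * x ^ (n - 1) = (∑ k ∈ Finset.range n, a k * x ^ k) + y * x ^ (n - 1) := by
    rw [add_mul, ← hx]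
    congr 1
    rw [← pow_succ', Nat.sub_add_cancel hn]
  have h1 : f (x + y) * f x ^ (n - 1)
      = f x ^ n + f y * f x ^ (n - 1) := by
    have := hf.2 (x + y) (x ^ (n - 1))
    rw [e, peel f hf n hn a x y ha, brachy_pow f hf, hsum] at this
    exact this.symm
  have h2 : f x ^ n = f x * f x ^ (n - 1) := by
    rw [← pow_succ', Nat.sub_add_cancel hn]
  rw [sub_mul, sub_mul, h1, h2]
  abel

end Peel

section Shift

variable {R : Type*} [Ring R]

lemma rep_mul (t : R) (m : ℕ) (u : ℕ → R) (hu : ∀ i, Addable (u i)) :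
    ∃ w : ℕ → R, (∀ i, Addable (w i)) ∧
      (∑ i ∈ Finset.range m, u i * t ^ i) * (t - 1)
        = ∑ i ∈ Finset.range (m + 1), w i * t ^ i := by
  refine ⟨fun i => (if i = 0 then 0 else u (i - 1)) - (if i = m then 0 else u i), ?_, ?_⟩
  · intro i
    dsimp only
    refine addable_sub ?_ ?_ <;> split <;> first | exact addable_zero | exact hu _
  · have hA : (∑ i ∈ Finset.range (m + 1),
        (if i = 0 then (0 : R) else u (i - 1)) * t ^ i) = ∑ i ∈ Finset.range m, u i * t ^ (i + 1) := by
      rw [Finset.sum_range_succ' (fun i => (if i = 0 then (0 : R) else u (i - 1)) * t ^ i)]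
      simp
    have hB : (∑ i ∈ Finset.range (m + 1),
        (if i = m then (0 : R) else u i) * t ^ i) = ∑ i ∈ Finset.range m, u i * t ^ i := by
      rw [Finset.sum_range_succ]
      have hmm : (if m = m then (0 : R) else u m) = 0 := if_pos rfl
      rw [hmm, zero_mul, add_zero]
      exact Finset.sum_congr rfl fun i hi => by
        rw [if_neg (Nat.ne_of_lt (Finset.mem_range.mp hi))]
    dsimp only
    calc (∑ i ∈ Finset.range m, u i * t ^ i) * (t - 1)
        = (∑ i ∈ Finset.range m, u i * t ^ (i + 1)) - ∑ i ∈ Finset.range m, u i * t ^ i := by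
          rw [mul_sub, mul_one, Finset.sum_mul]
          congr 1
          exact Finset.sum_congr rfl fun i _ => by rw [mul_assoc, ← pow_succ]
      _ = ∑ i ∈ Finset.range (m + 1),
            ((if i = 0 then (0 : R) else u (i - 1)) * t ^ i - (if i = m then 0 else u i) * t ^ i) := by
          rw [Finset.sum_sub_distrib, hA, hB]
      _ = ∑ i ∈ Finset.range (m + 1),
            ((if i = 0 then (0 : R) else u (i - 1)) - (if i = m then 0 else u i)) * t ^ i :=
          Finset.sum_congr rfl fun i _ => (sub_mul _ _ _).symm

lemma rep_pow (x : R) : ∀ (k : ℕ) (c : R), Addable c →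
    ∃ u : ℕ → R, (∀ i, Addable (u i)) ∧
      c * x ^ k = ∑ i ∈ Finset.range (k + 1), u i * (1 + x) ^ i := by
  intro k
  induction k with
  | zero =>
    intro c hc
    refine ⟨fun i => if i = 0 then c else 0, ?_, ?_⟩
    · intro i
      dsimp only
      by_cases h : i = 0
      · rw [if_pos h]; exact hc
      · rw [if_neg h]; exact addable_zero
    · simp
  | succ k ih =>
    intro c hc
    obtain ⟨u, hu, he⟩ := ih c hc
    obtain ⟨w, hw, hwe⟩ := rep_mul (1 + x) (k + 1) u hu
    refine ⟨w, hw, ?_⟩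
    rw [← hwe, ← he, show (1 : R) + x - 1 = x by abel, mul_assoc, ← pow_succ]

lemma shift (n : ℕ) (hn : 1 ≤ n) (x : R) (a : ℕ → R) (ha : ∀ k < n, Addable (a k))
    (hx : x ^ n = ∑ k ∈ Finset.range n, a k * x ^ k) :
    ∃ b : ℕ → R, (∀ k, Addable (b k)) ∧
      (1 + x) ^ n = ∑ k ∈ Finset.range n, b k * (1 + x) ^ k := by
  have htn : (1 + x) ^ n = ∑ k ∈ Finset.range n, (a k + (n.choose k : R)) * x ^ k := by
    rw [add_comm (1 : R) x, (Commute.one_right x).add_pow n, Finset.sum_range_succ]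
    simp only [one_pow, mul_one, Nat.choose_self, Nat.cast_one]
    rw [hx, ← Finset.sum_add_distrib]
    apply Finset.sum_congr rfl
    intro k _
    rw [add_mul, (Nat.cast_commute (n.choose k) (x ^ k)).eq]
    abel
  have hterm : ∀ k < n, ∃ u : ℕ → R, (∀ i, Addable (u i)) ∧
      (a k + (n.choose k : R)) * x ^ k = ∑ i ∈ Finset.range n, u i * (1 + x) ^ i := by
    intro k hk
    obtain ⟨u, hu, he⟩ := rep_pow x k (a k + (n.choose k : R))
      (addable_add (ha k hk) (addable_natCast _))
    refine ⟨fun i => if i < k + 1 then u i else 0, ?_, ?_⟩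
    · intro i
      dsimp only
      by_cases h : i < k + 1
      · rw [if_pos h]; exact hu _
      · rw [if_neg h]; exact addable_zero
    · rw [he]
      dsimp only
      have h1 : ∑ i ∈ Finset.range (k + 1), u i * (1 + x) ^ i
          = ∑ i ∈ Finset.range (k + 1), (if i < k + 1 then u i else 0) * (1 + x) ^ i :=
        Finset.sum_congr rfl fun i hi => by rw [if_pos (Finset.mem_range.mp hi)]
      rw [h1]
      exact Finset.sum_subset (Finset.range_subset_range.mpr hk)
        (fun i _ hi => by rw [if_neg (by simpa using hi), zero_mul])
  have hp : ∃ u : ℕ → R, (∀ i, Addable (u i)) ∧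
      (∑ k ∈ Finset.range n, (a k + (n.choose k : R)) * x ^ k)
        = ∑ i ∈ Finset.range n, u i * (1 + x) ^ i := by
    refine Finset.sum_induction _
      (fun r => ∃ u : ℕ → R, (∀ i, Addable (u i)) ∧ r = ∑ i ∈ Finset.range n, u i * (1 + x) ^ i)
      ?_ ?_ ?_
    · rintro r s ⟨u, hu, hru⟩ ⟨v, hv, hsv⟩
      refine ⟨fun i => u i + v i, fun i => addable_add (hu i) (hv i), ?_⟩
      rw [hru, hsv, ← Finset.sum_add_distrib]
      exact Finset.sum_congr rfl fun i _ => (add_mul _ _ _).symm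
    · exact ⟨fun _ => 0, fun _ => addable_zero, by simp⟩
    · intro k hk
      exact hterm k (Finset.mem_range.mp hk)
  obtain ⟨b, hb, hbe⟩ := hp
  exact ⟨b, hb, by rw [htn, hbe]⟩

end Shift

theorem stmt_15 {R : Type*} [Ring R] (n : ℕ) (hn : 1 ≤ n) (x : R) (a : ℕ → R)
    (ha : ∀ k < n, Addable (a k))
    (hx : x ^ n = ∑ k ∈ Finset.range n, a k * x ^ k) :
    Addable x := by
  intro S iS f hf y
  have h1 : (f (x + y) - f x - f y) * f x ^ (n - 1) = 0 :=
    vanish n hn x a ha hx f hf y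
  obtain ⟨b, hb, hbx⟩ := shift n hn x a ha hx
  have h2' : (f ((1 + x) + y) - f (1 + x) - f y) * f (1 + x) ^ (n - 1) = 0 :=
    vanish n hn (1 + x) b (fun k _ => hb k) hbx f hf y
  have e1 : f ((1 + x) + y) = 1 + f (x + y) := by rw [add_assoc, hf.1]
  have e2 : f (1 + x) = 1 + f x := hf.1 x
  rw [e1, e2, show (1 + f (x + y)) - (1 + f x) - f y = f (x + y) - f x - f y by abel] at h2'
  set D := f (x + y) - f x - f y with hDdef
  set P := f x with hPdef
  have hDB : D * (-P) ^ (n - 1) = 0 := by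
    rcases Nat.even_or_odd (n - 1) with he | ho
    · rw [he.neg_pow]; exact h1
    · rw [ho.neg_pow, mul_neg, h1, neg_zero]
  have hc : Commute (1 + P) (-P) := (Commute.one_left (-P)).add_left ((Commute.refl P).neg_right)
  have key : ∀ m, m ∈ Finset.range (2 * n + 1) →
      D * ((1 + P) ^ m * (-P) ^ (2 * n - m) * ((2 * n).choose m : S)) = 0 := by
    intro m hm
    by_cases hm2 : n - 1 ≤ m
    · have hsp : (1 + P) ^ m = (1 + P) ^ (n - 1) * (1 + P) ^ (m - (n - 1)) := by
        rw [← pow_add, Nat.add_sub_cancel' hm2]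
      rw [hsp, ← mul_assoc, ← mul_assoc, ← mul_assoc, h2', zero_mul, zero_mul, zero_mul]
    · have hge : n - 1 ≤ 2 * n - m := by omega
      have hsp : (-P) ^ (2 * n - m) = (-P) ^ (n - 1) * (-P) ^ (2 * n - m - (n - 1)) := by
        rw [← pow_add, Nat.add_sub_cancel' hge]
      rw [(hc.pow_pow m (2 * n - m)).eq, hsp]
      rw [← mul_assoc, ← mul_assoc, ← mul_assoc, hDB, zero_mul, zero_mul, zero_mul]
  have hD : D = 0 := by
    calc D = D * ((1 + P) + (-P)) ^ (2 * n) := by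
          rw [show (1 + P) + (-P) = 1 by abel, one_pow, mul_one]
      _ = D * ∑ m ∈ Finset.range (2 * n + 1),
            (1 + P) ^ m * (-P) ^ (2 * n - m) * ((2 * n).choose m : S) := by
          rw [hc.add_pow]
      _ = ∑ m ∈ Finset.range (2 * n + 1),
            D * ((1 + P) ^ m * (-P) ^ (2 * n - m) * ((2 * n).choose m : S)) := by
          rw [Finset.mul_sum]
      _ = 0 := Finset.sum_eq_zero key
  have : f (x + y) - f x - f y = 0 := hD
  rw [sub_sub, sub_eq_zero] at this
  exact this
end
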